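/- For every integer p, every binary vector x : Fin n → ℤ and every z : Fin n → ℤ, the square of an XP operator satisfies (XP_N(p|x|z))^2 = XP_N(2p | 0 | 2z) * D_N(2 • (x * z)); in particular the square of any XP operator with binary x-component is a diagonal XP operator. -/

import Mathlib

open Matrix

/-- `ω = exp(πi/N)`. -/
noncomputable def omN (N : ℕ) : ℂ := Complex.exp (Real.pi * Complex.I / N)

/-- The Pauli X matrix. -/
def Xm : Matrix (Fin 2) (Fin 2) ℂ := !![0, 1; 1, 0]

/-- The precision-`N` phase matrix `P = diag(1, ω²)`. -/
noncomputable def Pm (N : ℕ) : Matrix (Fin 2) (Fin 2) ℂ := !![1, 0; 0, (omN N) ^ 2]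

/-- The precision-`N` XP operator `XP_N(p|x|z)` on `n` qubits, the matrix indexed by bit
strings whose `(f, e)` entry is `ω^p * ∏ i, (X^(x i) * P^(z i)) (f i) (e i)`. -/
noncomputable def XP (N n : ℕ) (p : ℤ) (x z : Fin n → ℤ) :
    Matrix (Fin n → Fin 2) (Fin n → Fin 2) ℂ :=
  Matrix.of fun f e => (omN N) ^ p * ∏ i, ((Xm ^ (x i)) * (Pm N) ^ (z i)) (f i) (e i)

/-- The antisymmetric operator `D_N(z) = XP_N(∑ i, z i | 0 | -z)`. -/
noncomputable def DN (N n : ℕ) (z : Fin n → ℤ) :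
    Matrix (Fin n → Fin 2) (Fin n → Fin 2) ℂ :=
  XP N n (∑ i, z i) 0 (-z)

/-- A vector is binary if every entry is 0 or 1. -/
def IsBinary {n : ℕ} (x : Fin n → ℤ) : Prop := ∀ i, x i = 0 ∨ x i = 1

/-! Write `XP_N(p|x|z) = ω^p • ⨂ᵢ X^{xᵢ} P^{zᵢ}`; products of such operators are then computed
qubit by qubit. Conjugating by `X` swaps the diagonal entries of `P^z = diag(1, ω^{2z})`, so
`X P^z X = ω^{2z} P^{-z}` and hence `(X^x P^z)² = ω^{2xz} P^{2z-2xz}` for `x ∈ {0, 1}`.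
The scalars `ω^{2xᵢzᵢ}` collect into the phase `ω^{∑ᵢ 2xᵢzᵢ}` of `D_N(2xz)`. -/

theorem zpow_sum₀ {ι α : Type*} [CommGroupWithZero α] {a : α} (ha : a ≠ 0) (s : Finset ι)
    (f : ι → ℤ) : a ^ (∑ i ∈ s, f i) = ∏ i ∈ s, a ^ f i := by
  induction s using Finset.cons_induction with
  | empty => simp
  | cons i s hi ih => rw [Finset.sum_cons, Finset.prod_cons, zpow_add₀ ha, ih]

namespace Matrix

theorem diagonal_zpow {n K : Type*} [Fintype n] [DecidableEq n] [Field K] {v : n → K}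
    (hv : ∀ i, v i ≠ 0) (k : ℤ) : diagonal v ^ k = diagonal (v ^ k) := by
  cases k with
  | ofNat k => simp [diagonal_pow]
  | negSucc k =>
    rw [zpow_negSucc, diagonal_pow]
    refine inv_eq_left_inv ?_
    rw [diagonal_mul_diagonal, ← diagonal_one]
    congr 1
    ext i
    simp [hv i]

variable {ι R : Type*} [Fintype ι] [CommSemiring R] {l m n : ι → Type*}

def piKronecker (A : ∀ i, Matrix (l i) (m i) R) : Matrix (∀ i, l i) (∀ i, m i) R :=
  of fun f e => ∏ i, A i (f i) (e i)

theorem piKronecker_mul [DecidableEq ι] [∀ i, Fintype (m i)] (A : ∀ i, Matrix (l i) (m i) R)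
    (B : ∀ i, Matrix (m i) (n i) R) :
    piKronecker A * piKronecker B = piKronecker fun i => A i * B i := by
  ext f g
  simp only [piKronecker, mul_apply, of_apply, Fintype.prod_sum, Finset.prod_mul_distrib]

theorem piKronecker_smul (c : ι → R) (A : ∀ i, Matrix (l i) (m i) R) :
    piKronecker (fun i => c i • A i) = (∏ i, c i) • piKronecker A := by
  ext f g
  simp [piKronecker, Finset.prod_mul_distrib]

end Matrix

theorem omN_ne_zero (N : ℕ) : omN N ≠ 0 := Complex.exp_ne_zero _

theorem Pm_eq_diagonal (N : ℕ) : Pm N = diagonal ![1, omN N ^ 2] :=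
  (diagonal_vec2 _ _).symm

theorem Pm_zpow (N : ℕ) (k : ℤ) : Pm N ^ k = diagonal ![1, omN N ^ (2 * k)] := by
  rw [Pm_eq_diagonal, diagonal_zpow (by simp [Fin.forall_fin_two, omN_ne_zero])]
  congr 1
  ext i
  fin_cases i <;> simp [_root_.zpow_mul]

theorem isUnit_det_Pm (N : ℕ) : IsUnit (Pm N).det := by
  simp [Pm_eq_diagonal, omN_ne_zero]

theorem Xm_mul_diagonal_mul_Xm (a b : ℂ) : Xm * diagonal ![a, b] * Xm = diagonal ![b, a] := by
  simp [Xm, diagonal_vec2]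

theorem Xm_mul_Pm_zpow_mul_Xm (N : ℕ) (k : ℤ) :
    Xm * Pm N ^ k * Xm = omN N ^ (2 * k) • Pm N ^ (-k) := by
  rw [Pm_zpow, Pm_zpow, Xm_mul_diagonal_mul_Xm, ← diagonal_smul]
  congr 1
  ext i
  fin_cases i <;> simp [_root_.zpow_neg, zpow_ne_zero, omN_ne_zero]

theorem Xm_zpow_mul_Pm_zpow_sq (N : ℕ) {a : ℤ} (ha : a = 0 ∨ a = 1) (k : ℤ) :
    (Xm ^ a * Pm N ^ k) ^ 2 = omN N ^ (2 * (a * k)) • Pm N ^ (2 * k - 2 * (a * k)) := by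
  rcases ha with rfl | rfl
  · simp [sq, ← zpow_add (isUnit_det_Pm N), two_mul]
  · rw [zpow_one, sq, ← mul_assoc, Xm_mul_Pm_zpow_mul_Xm,
      smul_mul_assoc, zpow_neg_mul_zpow_self _ (isUnit_det_Pm N)]
    simp

theorem XP_eq_smul_piKronecker (N n : ℕ) (p : ℤ) (x z : Fin n → ℤ) :
    XP N n p x z = omN N ^ p • piKronecker fun i => Xm ^ x i * Pm N ^ z i := by
  ext f e
  rfl

theorem XP_mul_XP (N n : ℕ) (p p' : ℤ) (x z x' z' : Fin n → ℤ) :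
    XP N n p x z * XP N n p' x' z' =
      omN N ^ (p + p') •
        piKronecker fun i => Xm ^ x i * Pm N ^ z i * (Xm ^ x' i * Pm N ^ z' i) := by
  rw [XP_eq_smul_piKronecker, XP_eq_smul_piKronecker, smul_mul_smul, piKronecker_mul,
    zpow_add₀ (omN_ne_zero N)]

theorem XP_sq_general (N n : ℕ) (p : ℤ) (x z : Fin n → ℤ)
    (hx : IsBinary x) :
    (XP N n p x z) ^ 2 = XP N n (2 * p) 0 (2 • z) * DN N n (2 • (x * z)) := by
  rw [sq, DN, XP_mul_XP, XP_mul_XP]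
  simp only [← sq, Xm_zpow_mul_Pm_zpow_sq N (hx _), piKronecker_smul, smul_smul]
  congr 1
  · rw [← zpow_sum₀ (omN_ne_zero N), ← zpow_add₀ (omN_ne_zero N), two_mul]
    simp
  · congr 1
    funext i
    simp [← zpow_add (isUnit_det_Pm N), sub_eq_add_neg]

/-- **Square rule for XP operators** (SQ):
`(XP_N(p|x|z))² = XP_N(2p|0|2z) ⬝ D_N(2 x z)`; in particular the square of any XP operator
with binary x-component is a diagonal XP operator. -/
theorem XP_sq (N n : ℕ) (hN : 2 ≤ N) (hn : 1 ≤ n) (p : ℤ) (x z : Fin n → ℤ)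
    (hx : IsBinary x) :
    (XP N n p x z) ^ 2 = XP N n (2 * p) 0 (2 • z) * DN N n (2 • (x * z)) :=
  XP_sq_general N n p x z hx
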